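/- Let N = K·p^n + 1 where p is prime, gcd(K,p) = 1 and K < p^n. If Φ_p(a^((N-1)/p)) ≡ 0 (mod N) for some integer a, then N is prime and a is a p-th power non-residue modulo N. -/

import Mathlib

/-!
Write `N - 1 = K p^n` with `n = m + 1`. For every prime `q ∣ N`, the hypothesis says that `c = a^(K p^m)`
is a root of `Φ_p` modulo `q`; since `q ≠ p` (as `p ∣ N - 1`), `c ≠ 1` and `c^p = 1`, so `a^K` has order exactly `p^n` in
`(ℤ/q)ˣ`, whence `p^n ∣ q - 1`. Every prime factor of `N` therefore exceeds `p^n`, and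
`(p^n + 1)^2 > N` because `K < p^n`, so `N` is prime.
If `a` were a `p`-th power `x^p` modulo `N`, then `c = x^(N-1) = 1`, which is impossible.
-/

open Finset

section GeomSum

variable {R : Type*} [CommRing R] {c : R} {p : ℕ}

theorem pow_eq_one_of_geom_sum_eq_zero (h : ∑ i ∈ range p, c ^ i = 0) : c ^ p = 1 := by
  have := geom_sum_mul c p
  rwa [h, zero_mul, eq_comm, sub_eq_zero] at this

theorem ne_one_of_geom_sum_eq_zero (hp : (p : R) ≠ 0) (h : ∑ i ∈ range p, c ^ i = 0) : c ≠ 1 := by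
  rintro rfl
  simp_all

end GeomSum

theorem Nat.prime_of_forall_prime_dvd_lt_sq {N : ℕ} (hN : 2 ≤ N)
    (h : ∀ q, q.Prime → q ∣ N → N < q ^ 2) : N.Prime := by
  by_contra hNp
  have := Nat.minFac_sq_le_self (by omega) hNp
  have := h _ (Nat.minFac_prime (by omega)) (Nat.minFac_dvd N)
  omega

theorem ZMod.natCast_ne_zero_of_dvd_mul_pow_succ_add_one {q K p m : ℕ} (hq : q ≠ 1)
    (hdvd : q ∣ K * p ^ (m + 1) + 1) : (p : ZMod q) ≠ 0 := by
  have : Nontrivial (ZMod q) := ZMod.nontrivial_iff.mpr hq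
  intro hp
  have := (ZMod.natCast_eq_zero_iff _ q).mpr hdvd
  push_cast [hp] at this
  simp at this

section FiniteField

variable {F : Type*} [Field F] [Fintype F] {p : ℕ}

theorem pow_succ_dvd_card_sub_one_of_geom_sum_eq_zero (hp : p.Prime) (hpF : (p : F) ≠ 0)
    {b : F} {m : ℕ} (h : ∑ i ∈ range p, (b ^ p ^ m) ^ i = 0) :
    p ^ (m + 1) ∣ Fintype.card F - 1 := by
  have := Fact.mk hp
  have hpow : (b ^ p ^ m) ^ p = 1 := pow_eq_one_of_geom_sum_eq_zero h
  have hb0 : b ≠ 0 := by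
    rintro rfl
    simp [zero_pow (pow_ne_zero m hp.ne_zero), zero_pow hp.ne_zero] at hpow
  have horder : orderOf b = p ^ (m + 1) :=
    orderOf_eq_prime_pow (ne_one_of_geom_sum_eq_zero hpF h) (by rwa [pow_succ, pow_mul])
  exact horder ▸ orderOf_dvd_of_pow_eq_one (FiniteField.pow_card_sub_one_eq_one b hb0)

theorem not_exists_pow_eq_of_geom_sum_eq_zero (hpF : (p : F) ≠ 0)
    (hdvd : p ∣ Fintype.card F - 1) {a : F}
    (h : ∑ i ∈ range p, (a ^ ((Fintype.card F - 1) / p)) ^ i = 0) : ¬ ∃ x : F, x ^ p = a := by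
  rintro ⟨x, rfl⟩
  rw [← pow_mul, Nat.mul_div_cancel' hdvd] at h
  by_cases hx : x = 0
  · have hp0 : p ≠ 0 := by rintro rfl; simp at hpF
    have hcard : Fintype.card F - 1 ≠ 0 := by have := Fintype.one_lt_card (α := F); omega
    simp [hx, zero_pow hcard, hp0] at h
  · exact ne_one_of_geom_sum_eq_zero hpF h (FiniteField.pow_card_sub_one_eq_one x hx)

end FiniteField

theorem generalized_proth'_general (p K n N : ℕ) (hp : p.Prime) (hK : 0 < K) (hn : 0 < n)
    (hKlt : K < p ^ n) (hN : N = K * p ^ n + 1) (a : ℤ)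
    (ha : ∑ i ∈ Finset.range p, ((a : ZMod N) ^ ((N - 1) / p)) ^ i = 0) :
    Nat.Prime N ∧ ¬ ∃ x : ℤ, (x : ZMod N) ^ p = (a : ZMod N) := by
  obtain ⟨m, rfl⟩ : ∃ m, n = m + 1 := ⟨n - 1, by omega⟩
  have hE : (N - 1) / p = K * p ^ m := by
    rw [hN, Nat.add_sub_cancel, pow_succ, ← mul_assoc, Nat.mul_div_cancel _ hp.pos]
  have hfactor : ∀ q, q.Prime → q ∣ N → p ^ (m + 1) < q := by
    intro q hq hqN
    have := Fact.mk hq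
    have hsum : ∑ i ∈ range p, (((a : ZMod q) ^ K) ^ p ^ m) ^ i = 0 := by
      simpa only [map_sum, map_pow, map_intCast, map_zero, hE, pow_mul]
        using congrArg (ZMod.castHom hqN (ZMod q)) ha
    have hdvd := pow_succ_dvd_card_sub_one_of_geom_sum_eq_zero hp
      (ZMod.natCast_ne_zero_of_dvd_mul_pow_succ_add_one hq.one_lt.ne' (hN ▸ hqN)) hsum
    rw [ZMod.card] at hdvd
    have := Nat.le_of_dvd (Nat.sub_pos_of_lt hq.one_lt) hdvd
    omega
  have hNprime : N.Prime := by
    refine Nat.prime_of_forall_prime_dvd_lt_sq (by subst hN; nlinarith) fun q hq hqN => ?_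
    have hq := hfactor q hq hqN
    subst hN
    nlinarith
  have := Fact.mk hNprime
  refine ⟨hNprime, fun ⟨x, hx⟩ => ?_⟩
  have hcard : Fintype.card (ZMod N) = N := ZMod.card N
  refine not_exists_pow_eq_of_geom_sum_eq_zero
    (ZMod.natCast_ne_zero_of_dvd_mul_pow_succ_add_one hNprime.one_lt.ne' (by rw [← hN]))
    ⟨K * p ^ m, by rw [hcard, hN, Nat.add_sub_cancel]; ring⟩ (by rwa [hcard]) ⟨x, hx⟩

theorem generalized_proth' (p K n N : ℕ) (hp : p.Prime) (hK : 0 < K) (hn : 0 < n)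
    (hKp : Nat.gcd K p = 1) (hKlt : K < p ^ n) (hN : N = K * p ^ n + 1) (a : ℤ)
    (ha : ∑ i ∈ Finset.range p, ((a : ZMod N) ^ ((N - 1) / p)) ^ i = 0) :
    Nat.Prime N ∧ ¬ ∃ x : ℤ, (x : ZMod N) ^ p = (a : ZMod N) :=
  generalized_proth'_general p K n N hp hK hn hKlt hN a ha
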